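/- Let q_S be a K_S-level interval quantizer on [0,1] (piecewise constant with K_S cells). If q_1, ..., q_N are interval quantizers with K levels each and positive weights u_i summing to 1 satisfy Σ_i u_i q_i = q_S pointwise, then every interior cell boundary of q_S is a cell boundary of at least one q_i; consequently K_S ≤ N(K−1)+1. -/

import Mathlib

/-!
If no qᵢ jumps at an interior boundary `y` of q_S, then every qᵢ, hence the weighted sum q_S,
is constant on a neighbourhood of `y`. Just left of `y`, however, q_S takes its value on the
preceding cell, which differs from its value at `y`. So the interior boundaries of q_S (there are
K_S − 1 of them) lie among those of the qᵢ (at most N(K − 1)), which gives K_S ≤ N(K − 1) + 1.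
-/

open Set Filter Topology

theorem Fin.exists_castSucc_le_lt_succ {α : Type*} [LinearOrder α] :
    ∀ {K : ℕ} (b : Fin (K + 1) → α) {y : α}, b 0 ≤ y → y < b (Fin.last K) →
      ∃ k : Fin K, b k.castSucc ≤ y ∧ y < b k.succ
  | 0, _, _, h0, h1 => absurd h1 (not_lt.2 h0)
  | K + 1, b, y, h0, h1 => by
    by_cases h : y < b (Fin.last K).castSucc
    · obtain ⟨k, hk⟩ := exists_castSucc_le_lt_succ (b ∘ Fin.castSucc) h0 h
      exact ⟨k.castSucc, hk.1, by rw [Fin.succ_castSucc]; exact hk.2⟩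
    · exact ⟨Fin.last K, not_lt.1 h, by simpa using h1⟩

section StepFunction

variable {K : ℕ} {b : Fin (K + 1) → ℝ} {q : ℝ → ℝ}

theorem eventually_nhdsLT_eq_of_cell
    (hq : ∀ k : Fin K, ∀ x ∈ Ico (b k.castSucc) (b k.succ), q x = q (b k.castSucc))
    (k : Fin K) (hk : b k.castSucc < b k.succ) :
    ∀ᶠ x in 𝓝[<] b k.succ, q x = q (b k.castSucc) := by
  filter_upwards [Ioo_mem_nhdsLT hk] with x hx
  exact hq k x (Ioo_subset_Ico_self hx)

theorem eventually_nhds_eq_of_ne_boundary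
    (hq : ∀ k : Fin K, ∀ x ∈ Ico (b k.castSucc) (b k.succ), q x = q (b k.castSucc))
    {y : ℝ} (h0 : b 0 ≤ y) (h1 : y < b (Fin.last K)) (hy : ∀ k, b k ≠ y) :
    ∀ᶠ x in 𝓝 y, q x = q y := by
  obtain ⟨k, hk0, hk1⟩ := Fin.exists_castSucc_le_lt_succ b h0 h1
  have hlt : b k.castSucc < y := hk0.lt_of_ne (hy _)
  filter_upwards [Ioo_mem_nhds hlt hk1] with x hx
  rw [hq k x (Ioo_subset_Ico_self hx), hq k y ⟨hlt.le, hk1⟩]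

end StepFunction

theorem exists_boundary_eq_of_sum_eq {ι : Type*} [Fintype ι] {KS K : ℕ} {u : ι → ℝ}
    {qS : ℝ → ℝ} {bS : Fin (KS + 1) → ℝ}
    (hbSmono : StrictMono bS) (hbS0 : bS 0 = 0) (hbS1 : bS (Fin.last KS) = 1)
    (hqSconst : ∀ k : Fin KS,
      ∀ x ∈ Ico (bS k.castSucc) (bS k.succ), qS x = qS (bS k.castSucc))
    (hqSadj : ∀ k : Fin KS, (k : ℕ) + 1 < KS → qS (bS k.castSucc) ≠ qS (bS k.succ))
    {q : ι → ℝ → ℝ} {b : ι → Fin (K + 1) → ℝ}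
    (hb0 : ∀ i, b i 0 = 0) (hb1 : ∀ i, b i (Fin.last K) = 1)
    (hqconst : ∀ i, ∀ k : Fin K,
      ∀ x ∈ Ico (b i k.castSucc) (b i k.succ), q i x = q i (b i k.castSucc))
    (hsum : ∀ x ∈ Icc (0 : ℝ) 1, ∑ i, u i * q i x = qS x)
    {j : Fin (KS + 1)} (hj : bS j ∈ Ioo (0 : ℝ) 1) :
    ∃ (i : ι) (k : Fin (K + 1)), b i k = bS j := by
  by_contra! hne
  have hj0 : j ≠ 0 := by
    rintro rfl
    exact (hbS0 ▸ hj.1).false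
  obtain ⟨k, rfl⟩ := Fin.exists_succ_eq.2 hj0
  have hk : (k : ℕ) + 1 < KS := by
    have : k.succ ≠ Fin.last KS := fun h => (hbS1 ▸ h ▸ hj.2).false
    simpa [Fin.lt_def] using Fin.lt_last_iff_ne_last.2 this
  have hleft : ∀ᶠ x in 𝓝[<] bS k.succ, qS x = qS (bS k.castSucc) :=
    eventually_nhdsLT_eq_of_cell hqSconst k (hbSmono k.castSucc_lt_succ)
  have hright : ∀ᶠ x in 𝓝[<] bS k.succ, qS x = qS (bS k.succ) := by
    have hq : ∀ᶠ x in 𝓝 (bS k.succ), ∀ i, q i x = q i (bS k.succ) :=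
      eventually_all.2 fun i => eventually_nhds_eq_of_ne_boundary (hqconst i)
        (by rw [hb0 i]; exact hj.1.le) (by rw [hb1 i]; exact hj.2) (hne i)
    filter_upwards [nhdsWithin_le_nhds hq, Ioo_mem_nhdsLT hj.1] with x hx hx01
    rw [← hsum x ⟨hx01.1.le, (hx01.2.trans hj.2).le⟩, ← hsum _ (Ioo_subset_Icc_self hj)]
    simp only [hx]
  obtain ⟨x, hxl, hxr⟩ := (hleft.and hright).exists
  exact hqSadj k hk (hxl.symm.trans hxr)

theorem Finset.card_filter_mem_Ioo {α : Type*} [LinearOrder α] {s : Finset α} {a c : α}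
    (hs : ∀ x ∈ s, x ∈ Set.Icc a c) (ha : a ∈ s) (hc : c ∈ s) (hac : a ≠ c) :
    (s.filter (· ∈ Set.Ioo a c)).card = s.card - 2 := by
  have : s.filter (· ∈ Set.Ioo a c) = (s.erase a).erase c := by
    ext x
    simp only [Finset.mem_filter, Finset.mem_erase, Set.mem_Ioo]
    constructor
    · rintro ⟨hx, hax, hxc⟩
      exact ⟨hxc.ne, hax.ne', hx⟩
    · rintro ⟨hxc, hax, hx⟩
      exact ⟨hx, (hs x hx).1.lt_of_ne' hax, (hs x hx).2.lt_of_ne hxc⟩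
  rw [this, Finset.card_erase_of_mem (Finset.mem_erase.2 ⟨hac.symm, hc⟩),
    Finset.card_erase_of_mem ha]
  omega

noncomputable def interiorBoundaries {K : ℕ} (b : Fin (K + 1) → ℝ) : Finset ℝ :=
  (Finset.univ.image b).filter (· ∈ Ioo 0 1)

theorem card_interiorBoundaries {K : ℕ} {b : Fin (K + 1) → ℝ} (hb : StrictMono b)
    (h0 : b 0 = 0) (h1 : b (Fin.last K) = 1) :
    (interiorBoundaries b).card = K - 1 := by
  rw [interiorBoundaries, Finset.card_filter_mem_Ioo,
    Finset.card_image_of_injective _ hb.injective, Finset.card_univ, Fintype.card_fin]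
  · omega
  · simp only [Finset.mem_image, Finset.mem_univ, true_and]
    rintro _ ⟨k, rfl⟩
    rw [← h0, ← h1]
    exact ⟨hb.monotone (Fin.zero_le k), hb.monotone (Fin.le_last k)⟩
  · exact h0 ▸ Finset.mem_image_of_mem b (Finset.mem_univ 0)
  · exact h1 ▸ Finset.mem_image_of_mem b (Finset.mem_univ _)
  · exact zero_ne_one

theorem interiorBoundaries_subset_biUnion {ι : Type*} [Fintype ι] {KS K : ℕ}
    {bS : Fin (KS + 1) → ℝ} {b : ι → Fin (K + 1) → ℝ}
    (h : ∀ j, bS j ∈ Ioo (0 : ℝ) 1 → ∃ i k, b i k = bS j) :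
    interiorBoundaries bS ⊆ Finset.univ.biUnion fun i => interiorBoundaries (b i) := by
  intro x hx
  simp only [interiorBoundaries, Finset.mem_filter, Finset.mem_image, Finset.mem_univ,
    true_and] at hx
  obtain ⟨⟨j, rfl⟩, hj⟩ := hx
  obtain ⟨i, k, hik⟩ := h j hj
  simp only [interiorBoundaries, Finset.mem_biUnion, Finset.mem_filter, Finset.mem_image,
    Finset.mem_univ, true_and]
  exact ⟨i, ⟨k, hik⟩, hj⟩

/-- if a weighted sum of N interval quantizers, each with K
cells, equals a K_S-cell interval quantizer q_S (with distinct values on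
adjacent cells) pointwise on [0,1], then every interior cell boundary of q_S
is a cell boundary of some qᵢ, and consequently K_S ≤ N(K−1)+1. -/
theorem boundaries_split_and_level_bound
    (N KS K : ℕ)
    (u : Fin N → ℝ)
    -- the K_S-level interval quantizer q_S with boundaries bS
    (qS : ℝ → ℝ) (bS : Fin (KS + 1) → ℝ)
    (hbSmono : StrictMono bS) (hbS0 : bS 0 = 0) (hbS1 : bS (Fin.last KS) = 1)
    (hqSconst : ∀ k : Fin KS,
      ∀ x ∈ Set.Ico (bS k.castSucc) (bS k.succ), qS x = qS (bS k.castSucc))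
    -- adjacent cells of q_S carry distinct values
    (hqSadj : ∀ (j : ℕ) (h : j + 1 < KS),
      qS (bS ⟨j, by omega⟩) ≠ qS (bS ⟨j + 1, by omega⟩))
    -- the N K-level interval quantizers qᵢ with boundaries b i
    (q : Fin N → ℝ → ℝ) (b : Fin N → Fin (K + 1) → ℝ)
    (hbmono : ∀ i, StrictMono (b i))
    (hb0 : ∀ i, b i 0 = 0) (hb1 : ∀ i, b i (Fin.last K) = 1)
    (hqconst : ∀ i, ∀ k : Fin K,
      ∀ x ∈ Set.Ico (b i k.castSucc) (b i k.succ), q i x = q i (b i k.castSucc))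
    -- the weighted sum of the qᵢ equals q_S on [0,1]
    (hsum : ∀ x ∈ Set.Icc (0:ℝ) 1, ∑ i, u i * q i x = qS x) :
    (∀ j : Fin (KS + 1), bS j ∈ Set.Ioo (0:ℝ) 1 →
        ∃ (i : Fin N) (k : Fin (K + 1)), b i k = bS j) ∧
    KS ≤ N * (K - 1) + 1 := by
  have hbdry : ∀ j : Fin (KS + 1), bS j ∈ Ioo (0 : ℝ) 1 → ∃ i k, b i k = bS j :=
    fun _ hj => exists_boundary_eq_of_sum_eq hbSmono hbS0 hbS1 hqSconst (fun k => hqSadj k)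
      hb0 hb1 hqconst hsum hj
  refine ⟨hbdry, ?_⟩
  have hcard :=
    (Finset.card_le_card (interiorBoundaries_subset_biUnion hbdry)).trans Finset.card_biUnion_le
  simp only [card_interiorBoundaries hbSmono hbS0 hbS1,
    card_interiorBoundaries (hbmono _) (hb0 _) (hb1 _), Finset.sum_const, Finset.card_univ,
    Fintype.card_fin, smul_eq_mul] at hcard
  omega
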